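/- Let $(a_1,\dots,a_m)$ be a telescopic sequence with $d_i=\gcd(a_1,\dots,a_i)$, and for $2\le i\le m$ let $(\ell_{i,1},\dots,\ell_{i,m})$ be the unique element of $B(A_m)$ with $\sum_{j=1}^m a_j\ell_{i,j}=a_i\, d_{i-1}/d_i$. Then $\ell_{i,j}=0$ for all $j\ge i$. -/

import Mathlib

/-!
Write `d_s = gcd(a_1, …, a_s)` and `q_{s+1} = d_s / d_{s+1}`. Every `a_j` with `j ≤ s` is a
multiple of `d_s`, and so is the right-hand side `a_i q_i` whenever `i ≤ s + 1` (for `i = s + 1`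
it is `lcm(a_{s+1}, d_s)`). So if `ℓ_j = 0` for all `j > s + 1 ≥ i`, reducing the defining
equation modulo `d_s` leaves `a_{s+1} ℓ_{s+1} ≡ 0`, and cancelling `a_{s+1}` gives
`q_{s+1} ∣ ℓ_{s+1}`. Since `ℓ_{s+1} < q_{s+1}` in `B(A_m)`, `ℓ_{s+1} = 0`; descending induction
from `m` finishes the proof.
-/

/-- `dseq a i = gcd(a 1, …, a i)`. -/
def dseq (a : ℕ → ℕ) (i : ℕ) : ℕ := Finset.gcd (Finset.Icc 1 i) a

/-- membership in the numerical semigroup generated by `a 1, …, a m`. -/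
def InSemigroup (m : ℕ) (a : ℕ → ℕ) (x : ℕ) : Prop :=
  ∃ c : ℕ → ℕ, x = ∑ i ∈ Finset.Icc 1 m, c i * a i

/-- `(a 1, …, a m)` is a telescopic sequence. -/
def Telescopic (m : ℕ) (a : ℕ → ℕ) : Prop :=
  2 ≤ m ∧ (∀ i, 1 ≤ i → i ≤ m → 0 < a i) ∧ dseq a m = 1 ∧
  ∀ i, 2 ≤ i → i ≤ m → ∃ c : ℕ → ℕ,
    a i / dseq a i = ∑ j ∈ Finset.Icc 1 (i - 1), c j * (a j / dseq a (i - 1))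

/-- membership in the restricted exponent set `B(A_m)`. -/
def InB (m : ℕ) (a : ℕ → ℕ) (k : ℕ → ℕ) : Prop :=
  (∀ j, (j = 0 ∨ m < j) → k j = 0) ∧
  ∀ i, 2 ≤ i → i ≤ m → k i ≤ dseq a (i - 1) / dseq a i - 1

open Finset

lemma dseq_succ (a : ℕ → ℕ) (s : ℕ) : dseq a (s + 1) = (a (s + 1)).gcd (dseq a s) := by
  have hIcc : Icc 1 (s + 1) = insert (s + 1) (Icc 1 s) :=
    (insert_Icc_right_eq_Icc_succ (by simp)).symm
  rw [dseq, hIcc, gcd_insert]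
  rfl

lemma dseq_dvd {a : ℕ → ℕ} {s j : ℕ} (hj1 : 1 ≤ j) (hjs : j ≤ s) : dseq a s ∣ a j :=
  Finset.gcd_dvd (mem_Icc.mpr ⟨hj1, hjs⟩)

lemma dseq_pos {a : ℕ → ℕ} {s : ℕ} (ha : 0 < a 1) (hs : 1 ≤ s) : 0 < dseq a s :=
  Nat.pos_of_dvd_of_pos (dseq_dvd le_rfl hs) ha

lemma dseq_dvd_sum (a l : ℕ → ℕ) (s : ℕ) : dseq a s ∣ ∑ j ∈ Icc 1 s, a j * l j :=
  dvd_sum fun _ hj => (dseq_dvd (mem_Icc.mp hj).1 (mem_Icc.mp hj).2).mul_right _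

lemma dseq_dvd_mul_div_dseq_succ (a : ℕ → ℕ) (s : ℕ) :
    dseq a s ∣ a (s + 1) * (dseq a s / dseq a (s + 1)) := by
  rw [dseq_succ, ← Nat.mul_div_assoc _ (Nat.gcd_dvd_right _ _)]
  exact Nat.dvd_lcm_right _ _

lemma dseq_dvd_mul_div {a : ℕ → ℕ} {i s : ℕ} (hi : 1 ≤ i) (his : i ≤ s + 1) :
    dseq a s ∣ a i * (dseq a (i - 1) / dseq a i) := by
  rcases his.lt_or_eq with his | rfl
  · exact (dseq_dvd hi (Nat.le_of_lt_succ his)).mul_right _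
  · exact dseq_dvd_mul_div_dseq_succ a s

lemma eq_zero_of_dseq_dvd_sum {a l : ℕ → ℕ} {s : ℕ} (hs : 0 < dseq a s)
    (hl : l (s + 1) ≤ dseq a s / dseq a (s + 1) - 1)
    (hdvd : dseq a s ∣ ∑ j ∈ Icc 1 (s + 1), a j * l j) : l (s + 1) = 0 := by
  rw [sum_Icc_succ_top (by omega)] at hdvd
  replace hdvd := (Nat.dvd_add_right (dseq_dvd_sum a l s)).mp hdvd
  have hmod : a (s + 1) * l (s + 1) ≡ a (s + 1) * 0 [MOD dseq a s] := by
    rw [mul_zero]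
    exact Nat.modEq_zero_iff_dvd.mpr hdvd
  have hq : dseq a s / dseq a (s + 1) ∣ l (s + 1) := by
    have := Nat.ModEq.cancel_left_div_gcd hs hmod
    rwa [Nat.gcd_comm, ← dseq_succ, Nat.modEq_zero_iff_dvd] at this
  by_contra hne
  have := Nat.le_of_dvd (Nat.pos_of_ne_zero hne) hq
  omega

theorem stmt1_general (m : ℕ) (a : ℕ → ℕ) (h : Telescopic m a)
    (i : ℕ) (hi2 : 2 ≤ i)
    (l : ℕ → ℕ) (hB : InB m a l)
    (hsum : ∑ j ∈ Finset.Icc 1 m, a j * l j = a i * (dseq a (i - 1) / dseq a i)) :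
    ∀ j, i ≤ j → l j = 0 := by
  have ha : 0 < a 1 := h.2.1 1 le_rfl (one_le_two.trans h.1)
  have step : ∀ s, i ≤ s + 1 → s + 1 ≤ m → (∀ k, s + 1 < k → l k = 0) → l (s + 1) = 0 := by
    intro s his hsm hzero
    have htrunc : ∑ j ∈ Icc 1 (s + 1), a j * l j = ∑ j ∈ Icc 1 m, a j * l j :=
      sum_subset (Icc_subset_Icc_right hsm) fun k hk hks => by
        rw [hzero k (by simp only [mem_Icc] at hk hks; omega), mul_zero]
    refine eq_zero_of_dseq_dvd_sum (dseq_pos ha (by omega)) (hB.2 _ (by omega) hsm) ?_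
    rw [htrunc, hsum]
    exact dseq_dvd_mul_div (by omega) his
  intro j hij
  refine Nat.decreasingInduction (motive := fun t _ => ∀ k, t ≤ k → i ≤ k → l k = 0)
    (fun t _ ih k htk hik => ?_) (fun k hk _ => hB.1 k (Or.inr hk)) (Nat.zero_le (m + 1))
    j (Nat.zero_le j) hij
  rcases htk.lt_or_eq with htk | rfl
  · exact ih k htk hik
  · obtain ⟨s, rfl⟩ : ∃ s, t = s + 1 := ⟨t - 1, by omega⟩
    exact step s hik (by omega) fun k hk => ih k hk (by omega)

/-- The row exponents of the defining equations vanish for j ≥ i. -/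
theorem stmt1 (m : ℕ) (a : ℕ → ℕ) (h : Telescopic m a)
    (i : ℕ) (hi2 : 2 ≤ i) (him : i ≤ m)
    (l : ℕ → ℕ) (hB : InB m a l)
    (hsum : ∑ j ∈ Finset.Icc 1 m, a j * l j = a i * (dseq a (i - 1) / dseq a i)) :
    ∀ j, i ≤ j → l j = 0 :=
  stmt1_general m a h i hi2 l hB hsum
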